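/- Let α ∈ (0,1) and ν ∈ ℕ with 2ν > 1/(1-α). Then for every x ∈ ℝ and m ∈ ℕ, |K_{α,ν}(x + t_m(x)) - K_{α,ν}(x)| / |t_m(x)| ≥ ((2^{2ν(1-α)} - 2)/(2^{2ν(1-α)} - 1)) · (2^{2ν(1-α)})^m. -/

import Mathlib

/-!
Write `β = 2 ^ (2ν(1 - α))` and `t = t_m(x)`. Since `φ` is 1-Lipschitz and the `k`-th term of `K`
has weight `2^(-2ανk)` and inner scale `2^(2νk)`, its increment over `t` is at most `β^k |t|`.
For `k > m` the shift `2^(2νk) t` is an even integer, so these terms do not move at all. For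
`k = m`, the points `2^(2νm) x` and `2^(2νm) (x + t)` lie in one interval `[n, n + 1]`, on which
`φ` has slope `±1`, so that term moves by exactly `β^m |t|`. Hence
`|ΔK| ≥ (β^m - ∑_{k<m} β^k) |t| ≥ (β - 2) / (β - 1) · β^m |t|`.
-/

/-- The sawtooth function: φ(x) = |x| on [-1,1], extended 2-periodically. -/
noncomputable def phi (x : ℝ) : ℝ := |x - 2 * round (x / 2)|

/-- The Knopp-type function K_{α,ν}. -/
noncomputable def Kfun (α : ℝ) (ν : ℕ) (x : ℝ) : ℝ :=
  ∑' k : ℕ, (2 : ℝ) ^ (-(2 * α * (ν : ℝ) * (k : ℝ))) * phi ((2 : ℝ) ^ (2 * ν * k) * x)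

/-- The step function t_m: +2^{-2νm-1} if fract(2^{2νm}x) ∈ (0,1/2], else -2^{-2νm-1}. -/
noncomputable def tstep (ν m : ℕ) (x : ℝ) : ℝ :=
  if Int.fract ((2 : ℝ) ^ (2 * ν * m) * x) ∈ Set.Ioc (0 : ℝ) (1 / 2)
  then (2 : ℝ) ^ (-(2 * (ν : ℤ) * (m : ℤ) + 1))
  else -(2 : ℝ) ^ (-(2 * (ν : ℤ) * (m : ℤ) + 1))

lemma abs_sub_sum_abs_le_abs_sum_range_succ {G : Type*} [AddCommGroup G] [LinearOrder G]
    [IsOrderedAddMonoid G] (f : ℕ → G) (m : ℕ) :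
    |f m| - ∑ k ∈ Finset.range m, |f k| ≤ |∑ k ∈ Finset.range (m + 1), f k| := by
  rw [Finset.sum_range_succ, sub_le_iff_le_add]
  calc |f m| ≤ |∑ k ∈ Finset.range m, f k + f m| + |∑ k ∈ Finset.range m, f k| := by
        simpa using abs_sub (∑ k ∈ Finset.range m, f k + f m) (∑ k ∈ Finset.range m, f k)
    _ ≤ |∑ k ∈ Finset.range m, f k + f m| + ∑ k ∈ Finset.range m, |f k| := by
        gcongr; exact Finset.abs_sum_le_sum_abs f _

lemma div_mul_pow_le_pow_sub_geom_sum {K : Type*} [Field K] [LinearOrder K]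
    [IsStrictOrderedRing K] {b : K} (hb : 1 < b) (m : ℕ) :
    (b - 2) / (b - 1) * b ^ m ≤ b ^ m - ∑ k ∈ Finset.range m, b ^ k := by
  rw [geom_sum_eq hb.ne', div_mul_eq_mul_div, le_sub_iff_add_le, ← add_div,
    div_le_iff₀ (sub_pos.2 hb)]
  linarith

lemma phi_eq_norm_coe (x : ℝ) : phi x = ‖(x : AddCircle (2 : ℝ))‖ := by
  rw [AddCircle.norm_eq, phi, inv_mul_eq_div, mul_comm]

lemma phi_nonneg (x : ℝ) : 0 ≤ phi x := abs_nonneg _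

lemma phi_le_one (x : ℝ) : phi x ≤ 1 := by
  simpa [phi_eq_norm_coe] using AddCircle.norm_le_half_period (2 : ℝ) (x := x) two_ne_zero

lemma phi_periodic : Function.Periodic phi 2 := fun x => by
  simp only [phi_eq_norm_coe, AddCircle.coe_add_period]

lemma abs_phi_sub_phi_le (a b : ℝ) : |phi a - phi b| ≤ |a - b| := by
  simp only [phi_eq_norm_coe]
  refine (abs_norm_sub_norm_le _ _).trans ?_
  rw [← AddCircle.coe_sub]
  exact QuotientAddGroup.norm_mk_le_norm

lemma phi_eq_abs_sub_two_mul (y : ℝ) (j : ℤ) (h : |y - 2 * j| ≤ 1) : phi y = |y - 2 * j| := by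
  rw [← phi_periodic.sub_int_mul_eq j, mul_comm, phi_eq_norm_coe,
    AddCircle.norm_coe_eq_abs_iff (2 : ℝ) two_ne_zero]
  simpa using h

lemma abs_phi_sub_phi_of_mem_Icc {n : ℤ} {a b : ℝ} (ha : a ∈ Set.Icc (n : ℝ) (n + 1))
    (hb : b ∈ Set.Icc (n : ℝ) (n + 1)) : |phi a - phi b| = |a - b| := by
  obtain ⟨ha₀, ha₁⟩ := ha
  obtain ⟨hb₀, hb₁⟩ := hb
  obtain ⟨j, rfl | rfl⟩ := Int.even_or_odd' n
  · push_cast at *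
    have hpa : phi a = a - 2 * j := by
      rw [phi_eq_abs_sub_two_mul a j (abs_le.2 ⟨by linarith, by linarith⟩),
        abs_of_nonneg (by linarith)]
    have hpb : phi b = b - 2 * j := by
      rw [phi_eq_abs_sub_two_mul b j (abs_le.2 ⟨by linarith, by linarith⟩),
        abs_of_nonneg (by linarith)]
    rw [hpa, hpb, sub_sub_sub_cancel_right]
  · push_cast at ha₀ ha₁ hb₀ hb₁
    have hpa : phi a = 2 * (j + 1 : ℤ) - a := by
      rw [phi_eq_abs_sub_two_mul a (j + 1)
          (abs_le.2 ⟨by push_cast; linarith, by push_cast; linarith⟩),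
        abs_of_nonpos (by push_cast; linarith), neg_sub]
    have hpb : phi b = 2 * (j + 1 : ℤ) - b := by
      rw [phi_eq_abs_sub_two_mul b (j + 1)
          (abs_le.2 ⟨by push_cast; linarith, by push_cast; linarith⟩),
        abs_of_nonpos (by push_cast; linarith), neg_sub]
    rw [hpa, hpb, sub_sub_sub_cancel_left, abs_sub_comm]

noncomputable def halfStep (y : ℝ) : ℝ :=
  if Int.fract y ∈ Set.Ioc (0 : ℝ) (1 / 2) then 1 / 2 else -(1 / 2)

lemma abs_halfStep (y : ℝ) : |halfStep y| = 1 / 2 := by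
  unfold halfStep; split_ifs <;> norm_num

lemma exists_mem_Icc_and_add_halfStep_mem_Icc (y : ℝ) :
    ∃ n : ℤ, y ∈ Set.Icc (n : ℝ) (n + 1) ∧ y + halfStep y ∈ Set.Icc (n : ℝ) (n + 1) := by
  have h₀ := Int.floor_le y
  have h₁ := Int.lt_floor_add_one y
  unfold halfStep
  split_ifs with h
  all_goals rw [Int.fract, Set.mem_Ioc] at h
  · exact ⟨⌊y⌋, ⟨h₀, h₁.le⟩, by constructor <;> linarith⟩
  · rcases h₀.eq_or_lt with hy | hy
    · exact ⟨⌊y⌋ - 1, by push_cast; constructor <;> constructor <;> linarith⟩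
    · have : 1 / 2 < y - ⌊y⌋ := by by_contra! h'; exact h ⟨by linarith, h'⟩
      exact ⟨⌊y⌋, ⟨h₀, h₁.le⟩, by constructor <;> linarith⟩

lemma abs_phi_add_halfStep_sub (y : ℝ) : |phi (y + halfStep y) - phi y| = 1 / 2 := by
  obtain ⟨n, hy, hy'⟩ := exists_mem_Icc_and_add_halfStep_mem_Icc y
  rw [abs_phi_sub_phi_of_mem_Icc hy' hy, add_sub_cancel_left, abs_halfStep]

lemma phi_add_two_pow_mul_halfStep {n : ℕ} (hn : 2 ≤ n) (z y : ℝ) :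
    phi (z + 2 ^ n * halfStep y) = phi z := by
  obtain ⟨n, rfl⟩ := Nat.exists_eq_add_of_le' hn
  obtain ⟨j, hj⟩ : ∃ j : ℤ, (2 : ℝ) ^ (n + 2) * halfStep y = j * 2 := by
    unfold halfStep
    split_ifs
    · exact ⟨2 ^ n, by push_cast; ring⟩
    · exact ⟨-2 ^ n, by push_cast; ring⟩
  rw [hj, phi_periodic.int_mul j z]

lemma tstep_eq_halfStep_div (ν m : ℕ) (x : ℝ) :
    tstep ν m x = halfStep ((2 : ℝ) ^ (2 * ν * m) * x) / 2 ^ (2 * ν * m) := by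
  have h : (2 : ℝ) ^ (-(2 * (ν : ℤ) * (m : ℤ) + 1)) = 1 / 2 / 2 ^ (2 * ν * m) := by
    rw [zpow_neg, zpow_add_one₀ two_ne_zero, ← Nat.cast_ofNat (R := ℤ), ← Nat.cast_mul,
      ← Nat.cast_mul, zpow_natCast]
    ring
  unfold tstep halfStep
  split_ifs
  · rw [h]
  · rw [h, neg_div]

lemma two_pow_mul_add_tstep {ν m k : ℕ} (hmk : m ≤ k) (x : ℝ) :
    (2 : ℝ) ^ (2 * ν * k) * (x + tstep ν m x) =
      2 ^ (2 * ν * k) * x + 2 ^ (2 * ν * (k - m)) * halfStep ((2 : ℝ) ^ (2 * ν * m) * x) := by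
  have h : (2 : ℝ) ^ (2 * ν * k) = 2 ^ (2 * ν * (k - m)) * 2 ^ (2 * ν * m) := by
    rw [← pow_add, ← mul_add, Nat.sub_add_cancel hmk]
  rw [tstep_eq_halfStep_div, h]
  field_simp

section Kfun

variable {α : ℝ} {ν : ℕ}

noncomputable def knoppTerm (α : ℝ) (ν k : ℕ) (x : ℝ) : ℝ :=
  (2 : ℝ) ^ (-(2 * α * (ν : ℝ) * (k : ℝ))) * phi ((2 : ℝ) ^ (2 * ν * k) * x)

lemma Kfun_eq_tsum_knoppTerm (x : ℝ) : Kfun α ν x = ∑' k, knoppTerm α ν k x := rfl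

lemma two_rpow_neg_mul_eq_pow (k : ℕ) :
    (2 : ℝ) ^ (-(2 * α * (ν : ℝ) * (k : ℝ))) = ((2 : ℝ) ^ (-(2 * α * (ν : ℝ)))) ^ k := by
  rw [← Real.rpow_natCast, ← Real.rpow_mul zero_le_two, neg_mul]

lemma two_rpow_neg_mul_mul_two_pow (k : ℕ) :
    (2 : ℝ) ^ (-(2 * α * (ν : ℝ) * (k : ℝ))) * 2 ^ (2 * ν * k) =
      ((2 : ℝ) ^ (2 * (ν : ℝ) * (1 - α))) ^ k := by
  rw [← Real.rpow_natCast _ (2 * ν * k), ← Real.rpow_add two_pos, ← Real.rpow_natCast,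
    ← Real.rpow_mul zero_le_two]
  push_cast
  ring_nf

lemma summable_knoppTerm (hα : 0 < α) (hν : 0 < ν) (x : ℝ) :
    Summable fun k => knoppTerm α ν k x := by
  have hr : (2 : ℝ) ^ (-(2 * α * (ν : ℝ))) < 1 :=
    Real.rpow_lt_one_of_one_lt_of_neg one_lt_two
      (neg_lt_zero.2 (mul_pos (mul_pos two_pos hα) (Nat.cast_pos.2 hν)))
  refine Summable.of_nonneg_of_le (fun k => mul_nonneg (by positivity) (phi_nonneg _))
    (fun k => ?_) (summable_geometric_of_lt_one (by positivity) hr)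
  rw [knoppTerm, ← two_rpow_neg_mul_eq_pow]
  exact mul_le_of_le_one_right (by positivity) (phi_le_one _)

lemma abs_knoppTerm_add_sub_le (k : ℕ) (x t : ℝ) :
    |knoppTerm α ν k (x + t) - knoppTerm α ν k x| ≤
      ((2 : ℝ) ^ (2 * (ν : ℝ) * (1 - α))) ^ k * |t| := by
  have h := abs_phi_sub_phi_le ((2 : ℝ) ^ (2 * ν * k) * (x + t)) (2 ^ (2 * ν * k) * x)
  rw [← mul_sub, add_sub_cancel_left, abs_mul, abs_pow, abs_two] at h
  rw [knoppTerm, knoppTerm, ← mul_sub, abs_mul, abs_of_pos (Real.rpow_pos_of_pos two_pos _),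
    ← two_rpow_neg_mul_mul_two_pow]
  exact (mul_le_mul_of_nonneg_left h (by positivity)).trans_eq (mul_assoc _ _ _).symm

lemma abs_knoppTerm_add_tstep_sub (m : ℕ) (x : ℝ) :
    |knoppTerm α ν m (x + tstep ν m x) - knoppTerm α ν m x| =
      ((2 : ℝ) ^ (2 * (ν : ℝ) * (1 - α))) ^ m * |tstep ν m x| := by
  rw [knoppTerm, knoppTerm, ← mul_sub, abs_mul, abs_of_pos (Real.rpow_pos_of_pos two_pos _),
    two_pow_mul_add_tstep le_rfl, Nat.sub_self, mul_zero, pow_zero, one_mul,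
    abs_phi_add_halfStep_sub, ← two_rpow_neg_mul_mul_two_pow, tstep_eq_halfStep_div, abs_div,
    abs_halfStep, abs_of_pos (pow_pos two_pos _)]
  field_simp

lemma knoppTerm_add_tstep_of_lt (hν : 0 < ν) {m k : ℕ} (hmk : m < k) (x : ℝ) :
    knoppTerm α ν k (x + tstep ν m x) = knoppTerm α ν k x := by
  have h : 2 ≤ 2 * ν * (k - m) := by
    have := Nat.sub_pos_of_lt hmk
    nlinarith
  rw [knoppTerm, knoppTerm, two_pow_mul_add_tstep hmk.le, phi_add_two_pow_mul_halfStep h]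

lemma Kfun_add_tstep_sub (hα : 0 < α) (hν : 0 < ν) (m : ℕ) (x : ℝ) :
    Kfun α ν (x + tstep ν m x) - Kfun α ν x =
      ∑ k ∈ Finset.range (m + 1), (knoppTerm α ν k (x + tstep ν m x) - knoppTerm α ν k x) := by
  rw [Kfun_eq_tsum_knoppTerm, Kfun_eq_tsum_knoppTerm,
    ← (summable_knoppTerm hα hν _).tsum_sub (summable_knoppTerm hα hν _)]
  refine tsum_eq_sum fun k hk => ?_
  rw [knoppTerm_add_tstep_of_lt hν (by simpa using hk), sub_self]

lemma abs_Kfun_add_tstep_sub_ge (hα : 0 < α) (hν : 0 < ν) (m : ℕ) (x : ℝ) :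
    (((2 : ℝ) ^ (2 * (ν : ℝ) * (1 - α))) ^ m -
        ∑ k ∈ Finset.range m, ((2 : ℝ) ^ (2 * (ν : ℝ) * (1 - α))) ^ k) * |tstep ν m x| ≤
      |Kfun α ν (x + tstep ν m x) - Kfun α ν x| := by
  rw [Kfun_add_tstep_sub hα hν, sub_mul, Finset.sum_mul, ← abs_knoppTerm_add_tstep_sub]
  refine le_trans ?_ (abs_sub_sum_abs_le_abs_sum_range_succ _ m)
  gcongr with k
  exact abs_knoppTerm_add_sub_le k x _

end Kfun

theorem Kfun_difference_quotient_lower_bound (α : ℝ) (ν : ℕ)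
    (hα : α ∈ Set.Ioo (0 : ℝ) 1) (hν : 1 / (1 - α) < 2 * (ν : ℝ)) (x : ℝ) (m : ℕ) :
    |Kfun α ν (x + tstep ν m x) - Kfun α ν x| / |tstep ν m x| ≥
      ((2 : ℝ) ^ (2 * (ν : ℝ) * (1 - α)) - 2) / ((2 : ℝ) ^ (2 * (ν : ℝ) * (1 - α)) - 1)
        * ((2 : ℝ) ^ (2 * (ν : ℝ) * (1 - α))) ^ m := by
  obtain ⟨hα₀, hα₁⟩ := hα
  have hν₀ : 0 < ν := by
    have := (one_div_pos.2 (sub_pos.2 hα₁)).trans hν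
    exact_mod_cast pos_of_mul_pos_right this zero_le_two
  have hb : 1 < (2 : ℝ) ^ (2 * (ν : ℝ) * (1 - α)) :=
    Real.one_lt_rpow one_lt_two (mul_pos (mul_pos two_pos (Nat.cast_pos.2 hν₀)) (sub_pos.2 hα₁))
  have ht : 0 < |tstep ν m x| := by
    rw [tstep_eq_halfStep_div, abs_div, abs_halfStep]
    positivity
  rw [ge_iff_le, le_div_iff₀ ht]
  exact (mul_le_mul_of_nonneg_right (div_mul_pow_le_pow_sub_geom_sum hb m) ht.le).trans
    (abs_Kfun_add_tstep_sub_ge hα₀ hν₀ m x)
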